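/- Let h ∈ M_m(ℂ) be positive semidefinite with Tr(h) = 1, and u ∈ M_m(ℂ) a unitary. Then |Tr(u h u*) − Tr(h^{1/2} u h^{1/2} u*)| ≤ ‖h^{1/2}u*‖_HS · ‖u h^{1/2} − h^{1/2} u‖_HS ≤ ‖u h u* − h‖₁^{1/2}. -/

import Mathlib

open Matrix
open scoped ComplexOrder

/-- The square root of a positive semidefinite matrix, as defined in the older Mathlib
(`Matrix.PosSemidef.sqrt`, since removed). -/
noncomputable def Matrix.PosSemidef.sqrt {n : ℕ} {A : Matrix (Fin n) (Fin n) ℂ}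
    (hA : A.PosSemidef) : Matrix (Fin n) (Fin n) ℂ :=
  hA.1.eigenvectorUnitary.1 * diagonal ((↑) ∘ (√·) ∘ hA.1.eigenvalues) *
    (star hA.1.eigenvectorUnitary : Matrix (Fin n) (Fin n) ℂ)

/-- The Hilbert–Schmidt norm `‖x‖_HS = √(Tr(x* x))` of a complex matrix. -/
noncomputable def hsNorm {n : ℕ} (x : Matrix (Fin n) (Fin n) ℂ) : ℝ :=
  Real.sqrt ((xᴴ * x).trace.re)

/-- The trace norm `‖x‖₁ = Tr(|x|) = Tr(√(x* x))` of a complex matrix. -/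
noncomputable def traceNorm {n : ℕ} (x : Matrix (Fin n) (Fin n) ℂ) : ℝ :=
  ((Matrix.posSemidef_conjTranspose_mul_self x).sqrt).trace.re

/-!
For `s = h^{1/2}` one has `Tr(uhu*) − Tr(sus u*) = Tr((us − su) s u*)`, which is a Hilbert–Schmidt
inner product, so the first inequality is Cauchy–Schwarz. Since `‖su*‖_HS² = Tr h = 1` and
`us − su = (usu* − s) u` with `usu* = (uhu*)^{1/2}`, the second one is the Powers–Størmer inequality
`‖A^{1/2} − B^{1/2}‖_HS² ≤ ‖A − B‖₁`. To prove the latter, diagonalise `C = A^{1/2} − B^{1/2}` with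
eigenvalues `dᵢ` and put `S = A^{1/2} + B^{1/2}`: in that basis `2(A − B) = CS + SC` gives
`(A − B)ᵢᵢ = dᵢ Sᵢᵢ`, and `−S ≤ C ≤ S` gives `|dᵢ| ≤ Sᵢᵢ`, so `dᵢ² ≤ |(A − B)ᵢᵢ| ≤ |A − B|ᵢᵢ`.
-/

open scoped MatrixOrder

namespace Matrix

variable {n 𝕜 : Type*} [RCLike 𝕜]

lemma abs_re_diag_le_of_neg_le_of_le {X Y : Matrix n n 𝕜} (hl : -Y ≤ X) (hu : X ≤ Y) (i : n) :
    |RCLike.re (X i i)| ≤ RCLike.re (Y i i) := by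
  have hl' := (RCLike.nonneg_iff.mp ((le_iff.mp hl).diag_nonneg (i := i))).1
  have hu' := (RCLike.nonneg_iff.mp ((le_iff.mp hu).diag_nonneg (i := i))).1
  simp only [sub_apply, neg_apply, map_sub, map_neg] at hl' hu'
  exact abs_le.mpr ⟨by linarith, by linarith⟩

variable [Fintype n] [DecidableEq n]

lemma neg_cfcAbs_le {X : Matrix n n 𝕜} (hX : X.IsHermitian) : -CFC.abs X ≤ X := by
  rw [← sub_nonneg, sub_neg_eq_add, add_comm, CFC.abs_add_self X hX.isSelfAdjoint]
  exact nsmul_nonneg (CFC.posPart_nonneg X) 2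

lemma le_cfcAbs {X : Matrix n n 𝕜} (hX : X.IsHermitian) : X ≤ CFC.abs X := by
  rw [← sub_nonneg, CFC.abs_sub_self X hX.isSelfAdjoint]
  exact nsmul_nonneg (CFC.negPart_nonneg X) 2

lemma trace_conjStarAlgAut (U : unitary (Matrix n n 𝕜)) (M : Matrix n n 𝕜) :
    (Unitary.conjStarAlgAut 𝕜 _ U M).trace = M.trace := by
  rw [Unitary.conjStarAlgAut_apply, trace_mul_cycle, Unitary.coe_star_mul_self, Matrix.one_mul]

lemma sq_le_re_diag_of_diagonal_anticommutator {S X Y : Matrix n n 𝕜} {d : n → ℝ}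
    (hSl : -S ≤ diagonal (RCLike.ofReal ∘ d)) (hSu : diagonal (RCLike.ofReal ∘ d) ≤ S)
    (hX : X + X = diagonal (RCLike.ofReal ∘ d) * S + S * diagonal (RCLike.ofReal ∘ d))
    (hYl : -Y ≤ X) (hYu : X ≤ Y) (i : n) :
    d i ^ 2 ≤ RCLike.re (Y i i) := by
  have hXS : RCLike.re (X i i) = d i * RCLike.re (S i i) := by
    have h := congrArg (fun M => RCLike.re (M i i)) hX
    simp only [add_apply, diagonal_mul, mul_diagonal, Function.comp_apply, map_add,
      RCLike.re_ofReal_mul, RCLike.re_mul_ofReal] at h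
    linarith
  have hdS : |d i| ≤ RCLike.re (S i i) := by
    simpa using abs_re_diag_le_of_neg_le_of_le hSl hSu i
  calc d i ^ 2 = |d i| * |d i| := by rw [abs_mul_abs_self, sq]
    _ ≤ |d i| * RCLike.re (S i i) := mul_le_mul_of_nonneg_left hdS (abs_nonneg _)
    _ = |RCLike.re (X i i)| := by rw [hXS, abs_mul, abs_of_nonneg ((abs_nonneg _).trans hdS)]
    _ ≤ RCLike.re (Y i i) := abs_re_diag_le_of_neg_le_of_le hYl hYu i

theorem re_trace_sq_sub_cfcSqrt_le_re_trace_cfcAbs {A B : Matrix n n 𝕜} (hA : 0 ≤ A) (hB : 0 ≤ B) :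
    RCLike.re ((CFC.sqrt A - CFC.sqrt B) ^ 2).trace ≤ RCLike.re (CFC.abs (A - B)).trace := by
  have hsA := CFC.sqrt_nonneg A
  have hsB := CFC.sqrt_nonneg B
  have hSC : -(CFC.sqrt A + CFC.sqrt B) ≤ CFC.sqrt A - CFC.sqrt B ∧
      CFC.sqrt A - CFC.sqrt B ≤ CFC.sqrt A + CFC.sqrt B := by
    rw [neg_add', sub_eq_add_neg, sub_eq_add_neg]
    exact ⟨add_le_add_left (neg_le_self hsA) _, add_le_add_right (neg_le_self hsB) _⟩
  set C := CFC.sqrt A - CFC.sqrt B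
  set S := CFC.sqrt A + CFC.sqrt B
  have hC : C.IsHermitian := hsA.posSemidef.1.sub hsB.posSemidef.1
  have hX : (A - B).IsHermitian := hA.posSemidef.1.sub hB.posSemidef.1
  have hCS : A - B + (A - B) = C * S + S * C := by
    rw [← CFC.sqrt_mul_sqrt_self A, ← CFC.sqrt_mul_sqrt_self B]
    simp only [S, C]
    noncomm_ring
  set φ := Unitary.conjStarAlgAut 𝕜 (Matrix n n 𝕜) (star hC.eigenvectorUnitary)
  set d := hC.eigenvalues
  have hD : φ C = diagonal (RCLike.ofReal ∘ d) := hC.conjStarAlgAut_star_eigenvectorUnitary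
  have hd (i : n) : d i ^ 2 ≤ RCLike.re (φ (CFC.abs (A - B)) i i) := by
    refine sq_le_re_diag_of_diagonal_anticommutator (S := φ S) (X := φ (A - B)) ?_ ?_ ?_ ?_ ?_ i
    · simpa [hD] using OrderHomClass.mono φ hSC.1
    · simpa [hD] using OrderHomClass.mono φ hSC.2
    · simpa only [map_add, map_mul, hD] using congrArg φ hCS
    · simpa using OrderHomClass.mono φ (neg_cfcAbs_le hX)
    · exact OrderHomClass.mono φ (le_cfcAbs hX)
  calc RCLike.re (C ^ 2).trace = ∑ i, d i ^ 2 := by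
        rw [← trace_conjStarAlgAut (star hC.eigenvectorUnitary), map_pow, hD, diagonal_pow,
          trace_diagonal]
        simp only [map_sum, Pi.pow_apply, Function.comp_apply, ← RCLike.ofReal_pow,
          RCLike.ofReal_re]
    _ ≤ ∑ i, RCLike.re (φ (CFC.abs (A - B)) i i) := Finset.sum_le_sum fun i _ => hd i
    _ = RCLike.re (CFC.abs (A - B)).trace := by
        rw [← trace_conjStarAlgAut (star hC.eigenvectorUnitary), trace, map_sum]
        rfl

end Matrix

variable {n : ℕ}

lemma Matrix.PosSemidef.sqrt_eq_cfcSqrt {A : Matrix (Fin n) (Fin n) ℂ} (hA : A.PosSemidef) :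
    hA.sqrt = CFC.sqrt A := by
  rw [CFC.sqrt_eq_cfc, cfc_nnreal_eq_real _ A hA.nonneg, hA.1.cfc_eq]
  simp only [IsHermitian.cfc, Unitary.conjStarAlgAut_apply, Matrix.PosSemidef.sqrt]
  congr 3
  funext i
  simp [Real.coe_sqrt, Real.coe_toNNReal', hA.eigenvalues_nonneg i]

lemma Matrix.PosSemidef.sqrt_mul_sqrt_self {A : Matrix (Fin n) (Fin n) ℂ} (hA : A.PosSemidef) :
    hA.sqrt * hA.sqrt = A := by
  rw [hA.sqrt_eq_cfcSqrt, CFC.sqrt_mul_sqrt_self A hA.nonneg]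

lemma Matrix.PosSemidef.isHermitian_sqrt {A : Matrix (Fin n) (Fin n) ℂ} (hA : A.PosSemidef) :
    hA.sqrt.IsHermitian := by
  rw [hA.sqrt_eq_cfcSqrt]
  exact (CFC.sqrt_nonneg A).posSemidef.1

lemma traceNorm_eq_re_trace_cfcAbs (x : Matrix (Fin n) (Fin n) ℂ) :
    traceNorm x = (CFC.abs x).trace.re := by
  rw [traceNorm, PosSemidef.sqrt_eq_cfcSqrt]
  rfl

lemma norm_trace_conjTranspose_mul_le (a b : Matrix (Fin n) (Fin n) ℂ) :
    ‖(aᴴ * b).trace‖ ≤ hsNorm a * hsNorm b := by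
  let _ := toMatrixSeminormedAddCommGroup (1 : Matrix (Fin n) (Fin n) ℂ) PosSemidef.one
  let _ := toMatrixInnerProductSpace (1 : Matrix (Fin n) (Fin n) ℂ) PosSemidef.one
  have hinner (x y : Matrix (Fin n) (Fin n) ℂ) : inner ℂ x y = (xᴴ * y).trace := by
    change (y * 1 * xᴴ).trace = _
    rw [Matrix.mul_one, trace_mul_comm]
  have hnorm (x : Matrix (Fin n) (Fin n) ℂ) : ‖x‖ = hsNorm x := by
    rw [norm_eq_sqrt_re_inner (𝕜 := ℂ), hinner]
    rfl
  simpa only [hinner, hnorm] using norm_inner_le_norm (𝕜 := ℂ) a b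

lemma hsNorm_conjTranspose (a : Matrix (Fin n) (Fin n) ℂ) : hsNorm aᴴ = hsNorm a := by
  rw [hsNorm, hsNorm, conjTranspose_conjTranspose, trace_mul_comm]

lemma hsNorm_mul_unitary (a : Matrix (Fin n) (Fin n) ℂ) {u : Matrix (Fin n) (Fin n) ℂ}
    (hu : u ∈ unitary (Matrix (Fin n) (Fin n) ℂ)) : hsNorm (a * u) = hsNorm a := by
  have hu' : u * uᴴ = 1 := Unitary.mul_star_self_of_mem hu
  rw [hsNorm, hsNorm, conjTranspose_mul, Matrix.mul_assoc, trace_mul_comm, Matrix.mul_assoc,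
    Matrix.mul_assoc, hu', Matrix.mul_one]

lemma hsNorm_sqrt_sub_sqrt_le {A B : Matrix (Fin n) (Fin n) ℂ} (hA : A.PosSemidef)
    (hB : B.PosSemidef) : hsNorm (hA.sqrt - hB.sqrt) ≤ Real.sqrt (traceNorm (A - B)) := by
  rw [hsNorm, (hA.isHermitian_sqrt.sub hB.isHermitian_sqrt).eq, ← sq, traceNorm_eq_re_trace_cfcAbs,
    hA.sqrt_eq_cfcSqrt, hB.sqrt_eq_cfcSqrt]
  exact Real.sqrt_le_sqrt (re_trace_sq_sub_cfcSqrt_le_re_trace_cfcAbs hA.nonneg hB.nonneg)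

lemma Matrix.PosSemidef.sqrt_mul_mul_star_of_mem_unitary {A u : Matrix (Fin n) (Fin n) ℂ}
    (hA : A.PosSemidef) (hu : u ∈ unitary (Matrix (Fin n) (Fin n) ℂ)) :
    (hA.mul_mul_conjTranspose_same u).sqrt = u * hA.sqrt * star u := by
  rw [PosSemidef.sqrt_eq_cfcSqrt, hA.sqrt_eq_cfcSqrt, ← star_eq_conjTranspose]
  refine CFC.sqrt_unique ?_ (star_right_conjugate_nonneg (CFC.sqrt_nonneg A) u)
  have h := CFC.sqrt_mul_sqrt_self A hA.nonneg
  calc u * CFC.sqrt A * star u * (u * CFC.sqrt A * star u)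
      = u * CFC.sqrt A * (star u * u) * CFC.sqrt A * star u := by noncomm_ring
    _ = u * A * star u := by
      rw [Unitary.star_mul_self_of_mem hu, Matrix.mul_one, Matrix.mul_assoc u, h]

/-- For positive semidefinite `h` with `Tr(h) = 1` and a unitary `u`:
`|Tr(uhu*) − Tr(h^{1/2}uh^{1/2}u*)| ≤ ‖h^{1/2}u*‖_HS · ‖uh^{1/2} − h^{1/2}u‖_HS
  ≤ ‖uhu* − h‖₁^{1/2}`. -/
theorem trace_difference_estimate {m : ℕ} (h u : Matrix (Fin m) (Fin m) ℂ)
    (hh : h.PosSemidef) (htr : h.trace = 1)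
    (hu : u ∈ unitary (Matrix (Fin m) (Fin m) ℂ)) :
    ‖(u * h * star u).trace - (hh.sqrt * u * hh.sqrt * star u).trace‖
        ≤ hsNorm (hh.sqrt * star u) * hsNorm (u * hh.sqrt - hh.sqrt * u) ∧
    hsNorm (hh.sqrt * star u) * hsNorm (u * hh.sqrt - hh.sqrt * u)
        ≤ Real.sqrt (traceNorm (u * h * star u - h)) := by
  have hss := hh.sqrt_mul_sqrt_self
  have hsH := hh.isHermitian_sqrt.eq
  set s := hh.sqrt
  have hu₁ : star u * u = 1 := Unitary.star_mul_self_of_mem hu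
  have hsu : hsNorm (s * star u) = 1 := by
    rw [hsNorm_mul_unitary _ (Unitary.star_mem hu), hsNorm, hsH, hss, htr, Complex.one_re,
      Real.sqrt_one]
  refine ⟨?_, ?_⟩
  · calc ‖(u * h * star u).trace - (s * u * s * star u).trace‖
        = ‖((u * s - s * u)ᴴᴴ * (s * star u)).trace‖ := by
          rw [conjTranspose_conjTranspose, ← hss, ← trace_sub]
          congr 2
          noncomm_ring
      _ ≤ hsNorm (u * s - s * u)ᴴ * hsNorm (s * star u) := norm_trace_conjTranspose_mul_le _ _
      _ = _ := by rw [hsNorm_conjTranspose, mul_comm]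
  · have hcomm : u * s - s * u = (u * s * star u - s) * u := by
      rw [Matrix.sub_mul, Matrix.mul_assoc (u * s), hu₁, Matrix.mul_one]
    rw [hsu, one_mul, hcomm, hsNorm_mul_unitary _ hu, ← hh.sqrt_mul_mul_star_of_mem_unitary hu]
    exact hsNorm_sqrt_sub_sqrt_le _ hh
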